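/- arXiv:1404.3862 — 3 statements merged into one kernel-verified Lean document; each statement's English description precedes it below -/
import Mathlib

section
/- Let f(z;θ) be a family of probability density functions on ℝ, parameterized by θ ∈ ℝ^k, each supported in [-b,b], and let α ∈ (0,1). Assume: f(·;θ) is continuous for each θ; ∂f(z;θ)/∂θ_j exists, is bounded, and is continuous in z, so that differentiation under the integral sign is valid; the α-VaR ν_α(θ) and the α-CVaR Φ_α(θ) = α^{-1}∫_{-b}^{ν_α(θ)} z f(z;θ)dz are differentiable in θ_j; and ∫_{-b}^{ν_α(θ)} f(z;θ)dz = α for all θ. Then for each 1 ≤ j ≤ k: ∂Φ_α(θ)/∂θ_j = α^{-1}∫_{-b}^{ν_α(θ)} (∂f(z;θ)/∂θ_j)·(z − ν_α(θ)) dz. -/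
/-!
Differentiate the identities `∫_{-b}^{ν(θ)} f(z;θ) dz = α` and `α Φ(θ) = ∫_{-b}^{ν(θ)} z f(z;θ) dz`
in `θ_j` by the Leibniz rule with a moving upper limit. The first gives
`ν'·f(ν) = -∫_{-b}^{ν} ∂_j f`; substituting this into the boundary term `ν'·ν f(ν)` of the second
yields the formula. The Leibniz rule needs only that the integrand be Lipschitz in the parameter
near the endpoint, which the bounded partial derivative provides through the mean value inequality.
-/

open MeasureTheory Set intervalIntegral Filter Topology Asymptotics

lemma abs_sub_le_of_hasDerivAt_update {ι : Type*} [DecidableEq ι] {F : (ι → ℝ) → ℝ}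
    {F' : (ι → ℝ) → ι → ℝ} {M : ℝ}
    (hF : ∀ θ j, HasDerivAt (fun t => F (Function.update θ j t)) (F' θ j) (θ j))
    (hM : ∀ θ j, |F' θ j| ≤ M) (θ : ι → ℝ) (j : ι) (t s : ℝ) :
    |F (Function.update θ j t) - F (Function.update θ j s)| ≤ M * |t - s| := by
  have hderiv : ∀ r ∈ univ, HasDerivWithinAt (fun r => F (Function.update θ j r))
      (F' (Function.update θ j r) j) univ r := fun r _ => by
    have hr := hF (Function.update θ j r) j
    simp only [Function.update_idem, Function.update_self] at hr
    exact hr.hasDerivWithinAt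
  simpa using convex_univ.norm_image_sub_le_of_norm_hasDerivWithin_le hderiv
    (fun r _ => hM _ _) (mem_univ s) (mem_univ t)

lemma eventually_abs_mul_sub_mul_le {g : ℝ → ℝ → ℝ} {t₀ M : ℝ} (c : ℝ)
    (hg : ∀ t z, |g t z - g t₀ z| ≤ M * |t - t₀|) :
    ∀ᶠ z in 𝓝 c, ∀ t, |z * g t z - z * g t₀ z| ≤ (|c| + 1) * M * |t - t₀| := by
  filter_upwards [Metric.closedBall_mem_nhds c one_pos] with z hz t
  have hzc : |z| ≤ |c| + 1 := by
    rw [Metric.mem_closedBall, Real.dist_eq] at hz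
    linarith [abs_sub_abs_le_abs_sub z c]
  rw [← mul_sub, abs_mul, mul_assoc]
  exact mul_le_mul hzc (hg t z) (abs_nonneg _) (by positivity)

lemma hasDerivAt_integral_sub_of_lipschitz_near {φ : ℝ → ℝ → ℝ} {u : ℝ → ℝ} {t₀ M : ℝ}
    (hu : ContinuousAt u t₀)
    (hLip : ∀ᶠ z in 𝓝 (u t₀), ∀ t, |φ t z - φ t₀ z| ≤ M * |t - t₀|) :
    HasDerivAt (fun t => ∫ z in u t₀..u t, φ t z - φ t₀ z) 0 t₀ := by
  rw [hasDerivAt_iff_isLittleO]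
  simp only [integral_same, sub_self, sub_zero, smul_eq_mul, mul_zero]
  obtain ⟨δ, hδ, hball⟩ := Metric.eventually_nhds_iff_ball.mp hLip
  have hbound : (fun t => ∫ z in u t₀..u t, φ t z - φ t₀ z)
      =O[𝓝 t₀] fun t => (u t - u t₀) * (t - t₀) := by
    refine IsBigO.of_bound M ?_
    filter_upwards [hu.eventually (Metric.ball_mem_nhds _ hδ)] with t ht
    have hnear : ∀ z ∈ uIoc (u t₀) (u t), ‖φ t z - φ t₀ z‖ ≤ M * |t - t₀| := fun z hz =>
      hball z ((abs_sub_left_of_mem_uIcc (uIoc_subset_uIcc hz)).trans_lt ht) t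
    calc ‖∫ z in u t₀..u t, φ t z - φ t₀ z‖ ≤ M * |t - t₀| * |u t - u t₀| :=
          norm_integral_le_of_norm_le_const hnear
      _ = M * ‖(u t - u t₀) * (t - t₀)‖ := by
          rw [norm_mul, Real.norm_eq_abs, Real.norm_eq_abs]; ring
  have hsmall : (fun t => (u t - u t₀) * (t - t₀)) =o[𝓝 t₀] fun t => t - t₀ := by
    have hu0 : (fun t => u t - u t₀) =o[𝓝 t₀] fun _ => (1 : ℝ) :=
      (isLittleO_one_iff ℝ).mpr (tendsto_sub_nhds_zero_iff.mpr hu)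
    simpa using hu0.mul_isBigO (isBigO_refl (fun t => t - t₀) _)
  exact hbound.trans_isLittleO hsmall

lemma hasDerivAt_integral_of_moving_limit {φ : ℝ → ℝ → ℝ} {u : ℝ → ℝ} {a t₀ u' D M : ℝ}
    (hφ : ∀ t, Continuous (φ t))
    (hLip : ∀ᶠ z in 𝓝 (u t₀), ∀ t, |φ t z - φ t₀ z| ≤ M * |t - t₀|)
    (hu : HasDerivAt u u' t₀)
    (hD : HasDerivAt (fun t => ∫ z in a..u t₀, φ t z) D t₀) :
    HasDerivAt (fun t => ∫ z in a..u t, φ t z) (D + u' * φ t₀ (u t₀)) t₀ := by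
  have hFTC : HasDerivAt (fun t => ∫ z in u t₀..u t, φ t₀ z) (u' * φ t₀ (u t₀)) t₀ := by
    simpa [mul_comm, Function.comp_def] using
      (integral_hasDerivAt_right ((hφ t₀).intervalIntegrable _ _)
        ((hφ t₀).stronglyMeasurableAtFilter _ _) (hφ t₀).continuousAt).comp t₀ hu
  have hsplit : (fun t => ∫ z in a..u t, φ t z) = fun t => (∫ z in a..u t₀, φ t z)
      + (∫ z in u t₀..u t, φ t₀ z) + ∫ z in u t₀..u t, φ t z - φ t₀ z := by
    funext t
    have hadd := integral_add_adjacent_intervals (μ := volume)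
      ((hφ t).intervalIntegrable a (u t₀)) ((hφ t).intervalIntegrable (u t₀) (u t))
    rw [integral_sub ((hφ t).intervalIntegrable _ _) ((hφ t₀).intervalIntegrable _ _)]
    linarith
  rw [hsplit]
  exact ((hD.add hFTC).add
    (hasDerivAt_integral_sub_of_lipschitz_near hu.continuousAt hLip)).congr_deriv (add_zero _)

theorem stmt_3_general (k : ℕ) (b : ℝ) (α : ℝ)
    (f : (Fin k → ℝ) → ℝ → ℝ) (f' : (Fin k → ℝ) → Fin k → ℝ → ℝ)
    (ν : (Fin k → ℝ) → ℝ) (ν' : (Fin k → ℝ) → Fin k → ℝ)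
    (Φ : (Fin k → ℝ) → ℝ) (Φ' : (Fin k → ℝ) → Fin k → ℝ)
    -- `f(·;θ)` is continuous
    (hf_cont : ∀ θ, Continuous (f θ))
    -- `∂f(z;θ)/∂θ_j` exists, is bounded, and is continuous in `z`
    (hf' : ∀ θ j z, HasDerivAt (fun t => f (Function.update θ j t) z) (f' θ j z) (θ j))
    (hf'_bdd : ∃ M, ∀ θ j z, |f' θ j z| ≤ M)
    (hf'_cont : ∀ θ j, Continuous (f' θ j))
    -- differentiation under the integral sign is valid
    (hDUI : ∀ θ j c, HasDerivAt (fun t => ∫ z in (-b)..c, f (Function.update θ j t) z)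
      (∫ z in (-b)..c, f' θ j z) (θ j))
    (hDUI2 : ∀ θ j c, HasDerivAt (fun t => ∫ z in (-b)..c, z * f (Function.update θ j t) z)
      (∫ z in (-b)..c, z * f' θ j z) (θ j))
    -- the α-VaR and its differentiability in `θ_j`
    (hν' : ∀ θ j, HasDerivAt (fun t => ν (Function.update θ j t)) (ν' θ j) (θ j))
    -- level condition: `∫_{-b}^{ν(θ)} f(z;θ) dz = α` for all `θ`
    (hlevel : ∀ θ, ∫ z in (-b)..(ν θ), f θ z = α)
    -- the α-CVaR and its differentiability in `θ_j`
    (hΦ : ∀ θ, Φ θ = α⁻¹ * ∫ z in (-b)..(ν θ), z * f θ z)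
    (hΦ' : ∀ θ j, HasDerivAt (fun t => Φ (Function.update θ j t)) (Φ' θ j) (θ j)) :
    ∀ (θ : Fin k → ℝ) (j : Fin k),
      Φ' θ j = α⁻¹ * ∫ z in (-b)..(ν θ), f' θ j z * (z - ν θ) := by
  intro θ j
  obtain ⟨M, hM⟩ := hf'_bdd
  have hlip (t z : ℝ) :
      |f (Function.update θ j t) z - f (Function.update θ j (θ j)) z| ≤ M * |t - θ j| :=
    abs_sub_le_of_hasDerivAt_update (F := (f · z)) (fun θ j => hf' θ j z) (fun θ j => hM θ j z)
      θ j t (θ j)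
  have hlevel' := hasDerivAt_integral_of_moving_limit (hf_cont <| Function.update θ j ·)
    (.of_forall fun z t => hlip t z) (hν' θ j) (hDUI θ j _)
  have hcvar := hasDerivAt_integral_of_moving_limit
    (φ := fun t z => z * f (Function.update θ j t) z) (fun t => by fun_prop)
    (eventually_abs_mul_sub_mul_le _ hlip) (hν' θ j) (hDUI2 θ j _)
  simp only [Function.update_eq_self, hlevel] at hlevel' hcvar
  have hboundary : (∫ z in (-b)..ν θ, f' θ j z) + ν' θ j * f θ (ν θ) = 0 :=
    hlevel'.unique (hasDerivAt_const _ _)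
  have hΦ'eq : Φ' θ j = α⁻¹ * ((∫ z in (-b)..ν θ, z * f' θ j z) + ν' θ j * (ν θ * f θ (ν θ))) :=
    (hΦ' θ j).unique (by simpa only [hΦ] using hcvar.const_mul α⁻¹)
  have hsplit : ∫ z in (-b)..ν θ, f' θ j z * (z - ν θ)
      = (∫ z in (-b)..ν θ, z * f' θ j z) - (∫ z in (-b)..ν θ, f' θ j z) * ν θ := by
    rw [← intervalIntegral.integral_mul_const, ← integral_sub
      (Continuous.intervalIntegrable (by fun_prop) _ _)
      (Continuous.intervalIntegrable (by fun_prop) _ _)]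
    exact integral_congr fun z _ => by ring
  rw [hΦ'eq, hsplit]
  linear_combination (α⁻¹ * ν θ) * hboundary

/-- Combining the two Leibniz-rule identities: for the α-CVaR
`Φ(θ) = α⁻¹ ∫_{-b}^{ν(θ)} z f(z;θ) dz` of a parameterized family of densities `f(·;θ)`
supported in `[-b,b]`, one has
`∂Φ(θ)/∂θ_j = α⁻¹ ∫_{-b}^{ν(θ)} (∂f(z;θ)/∂θ_j)·(z − ν(θ)) dz`. -/
theorem stmt_3 (k : ℕ) (b : ℝ) (α : ℝ) (hα : α ∈ Set.Ioo (0:ℝ) 1)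
    (f : (Fin k → ℝ) → ℝ → ℝ) (f' : (Fin k → ℝ) → Fin k → ℝ → ℝ)
    (ν : (Fin k → ℝ) → ℝ) (ν' : (Fin k → ℝ) → Fin k → ℝ)
    (Φ : (Fin k → ℝ) → ℝ) (Φ' : (Fin k → ℝ) → Fin k → ℝ)
    -- `f(·;θ)` is a probability density supported in `[-b,b]`
    (hf_nonneg : ∀ θ z, 0 ≤ f θ z)
    (hf_supp : ∀ θ z, z ∉ Set.Icc (-b) b → f θ z = 0)
    (hf_int : ∀ θ, ∫ z in (-b)..b, f θ z = 1)
    -- `f(·;θ)` is continuous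
    (hf_cont : ∀ θ, Continuous (f θ))
    -- `∂f(z;θ)/∂θ_j` exists, is bounded, and is continuous in `z`
    (hf' : ∀ θ j z, HasDerivAt (fun t => f (Function.update θ j t) z) (f' θ j z) (θ j))
    (hf'_bdd : ∃ M, ∀ θ j z, |f' θ j z| ≤ M)
    (hf'_cont : ∀ θ j, Continuous (f' θ j))
    -- differentiation under the integral sign is valid
    (hDUI : ∀ θ j c, HasDerivAt (fun t => ∫ z in (-b)..c, f (Function.update θ j t) z)
      (∫ z in (-b)..c, f' θ j z) (θ j))
    (hDUI2 : ∀ θ j c, HasDerivAt (fun t => ∫ z in (-b)..c, z * f (Function.update θ j t) z)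
      (∫ z in (-b)..c, z * f' θ j z) (θ j))
    -- the α-VaR and its differentiability in `θ_j`
    (hν : ∀ θ, ν θ = sInf {z | α ≤ ∫ u in (-b)..z, f θ u})
    (hν' : ∀ θ j, HasDerivAt (fun t => ν (Function.update θ j t)) (ν' θ j) (θ j))
    -- level condition: `∫_{-b}^{ν(θ)} f(z;θ) dz = α` for all `θ`
    (hlevel : ∀ θ, ∫ z in (-b)..(ν θ), f θ z = α)
    -- the α-CVaR and its differentiability in `θ_j`
    (hΦ : ∀ θ, Φ θ = α⁻¹ * ∫ z in (-b)..(ν θ), z * f θ z)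
    (hΦ' : ∀ θ j, HasDerivAt (fun t => Φ (Function.update θ j t)) (Φ' θ j) (θ j)) :
    ∀ (θ : Fin k → ℝ) (j : Fin k),
      Φ' θ j = α⁻¹ * ∫ z in (-b)..(ν θ), f' θ j z * (z - ν θ) :=
  stmt_3_general k b α f f' ν ν' Φ Φ' hf_cont hf' hf'_bdd hf'_cont hDUI hDUI2 hν' hlevel hΦ hΦ'
end

section
/- (Proposition 1: CVaR gradient formula, 1-dimensional case.) Let Z be a continuous real random variable bounded in [-b,b] whose probability density function f_Z(z;θ) is parameterized by θ ∈ ℝ^k, and let α ∈ (0,1). Assume: for all θ and 1 ≤ j ≤ k, the partial derivatives ∂ν_α(Z;θ)/∂θ_j and ∂Φ_α(Z;θ)/∂θ_j exist and are bounded; for all θ, z, and j, (∂f_Z(z;θ)/∂θ_j)/f_Z(z;θ) exists and is bounded; f_Z(·;θ) is continuous and ∂f_Z(z;θ)/∂θ_j is bounded and continuous in z so that differentiation under the integral sign is valid; and ∫_{-b}^{ν_α(Z;θ)} f_Z(z;θ)dz = α for all θ. Then ∂Φ_α(Z;θ)/∂θ_j = E^θ[ (∂ log f_Z(Z;θ)/∂θ_j)·(Z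 − ν_α(Z;θ)) | Z ≤ ν_α(Z;θ) ]. -/
open MeasureTheory Set intervalIntegral

/-!
Along the coordinate line `t ↦ θ + (t - θⱼ) eⱼ`, differentiate the level condition
`∫_{-b}^{ν} f = α` and the first moment `∫_{-b}^{ν} z f = α Φ` by the Leibniz rule with a moving
endpoint (valid because `∂f/∂θⱼ` is bounded, so `f` is Lipschitz in `t` uniformly in `z`).
The first gives `∫ ∂f = -ν' f(ν)`, which cancels the boundary term `ν' ν f(ν)` of the second,
leaving `α Φ' = ∫_{-b}^{ν} (z - ν) ∂f`. Finally `∂f = (∂f / f) f` and the density of `Z`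
turn this integral into `E[(∂ log f)(Z) (Z - ν); Z ≤ ν]`.
-/

open Filter Topology in
theorem hasDerivAt_integral_of_abs_le_mul {ψ : ℝ → ℝ → ℝ} {c : ℝ → ℝ} {t₀ L : ℝ}
    (hc : ContinuousAt c t₀) (hψ : ∀ t, ∀ᵐ z, |ψ t z| ≤ L * |t - t₀|) :
    HasDerivAt (fun t => ∫ z in c t₀..c t, ψ t z) 0 t₀ := by
  rw [hasDerivAt_iff_isLittleO, Asymptotics.isLittleO_iff]
  intro ε hε
  have hsmall : Tendsto (fun t => L * |c t - c t₀|) (𝓝 t₀) (𝓝 0) := by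
    simpa using ((hc.sub (continuousAt_const (y := c t₀))).abs.const_mul L).tendsto
  filter_upwards [hsmall.eventually_lt_const hε] with t ht
  have hbound : ‖∫ z in c t₀..c t, ψ t z‖ ≤ L * |t - t₀| * |c t - c t₀| :=
    norm_integral_le_of_norm_le_const_ae ((hψ t).mono fun z hz _ => hz)
  simp only [integral_same, sub_zero, smul_zero, Real.norm_eq_abs] at hbound ⊢
  calc |∫ z in c t₀..c t, ψ t z| ≤ L * |c t - c t₀| * |t - t₀| := by linarith
    _ ≤ ε * |t - t₀| := by gcongr

open Filter in
theorem hasDerivAt_integral_upper_of_lipschitz {φ : ℝ → ℝ → ℝ} {c : ℝ → ℝ} {a t₀ c' D L : ℝ}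
    (hφ : ∀ t, Continuous (φ t)) (hc : HasDerivAt c c' t₀)
    (hD : HasDerivAt (fun t => ∫ z in a..c t₀, φ t z) D t₀)
    (hL : ∀ t, ∀ᵐ z, |φ t z - φ t₀ z| ≤ L * |t - t₀|) :
    HasDerivAt (fun t => ∫ z in a..c t, φ t z) (D + c' * φ t₀ (c t₀)) t₀ := by
  have hsplit : ∀ t, ∫ z in a..c t, φ t z = (∫ z in a..c t₀, φ t z) +
      ((∫ z in c t₀..c t, φ t₀ z) + ∫ z in c t₀..c t, (φ t z - φ t₀ z)) := fun t => by
    rw [integral_sub ((hφ t).intervalIntegrable _ _) ((hφ t₀).intervalIntegrable _ _),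
      add_sub_cancel, integral_add_adjacent_intervals ((hφ t).intervalIntegrable _ _)
        ((hφ t).intervalIntegrable _ _)]
  have hmoving : HasDerivAt (fun t => ∫ z in c t₀..c t, φ t₀ z) (φ t₀ (c t₀) * c') t₀ :=
    ((hφ t₀).integral_hasStrictDerivAt _ _).hasDerivAt.comp t₀ hc
  rw [mul_comm c', ← add_zero (φ t₀ (c t₀) * c')]
  exact (hD.add (hmoving.add (hasDerivAt_integral_of_abs_le_mul hc.continuousAt hL)))
    |>.congr_of_eventuallyEq (Eventually.of_forall hsplit)

theorem abs_sub_le_of_hasDerivAt {g g' : ℝ → ℝ} {M : ℝ} (hg : ∀ t, HasDerivAt g (g' t) t)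
    (hM : ∀ t, |g' t| ≤ M) (s t : ℝ) : |g t - g s| ≤ M * |t - s| :=
  Convex.norm_image_sub_le_of_norm_hasDerivWithin_le (fun x _ => (hg x).hasDerivWithinAt)
    (fun x _ => hM x) convex_univ (mem_univ s) (mem_univ t)

open Filter in
/-- The boundary term `c' c φ(t₀, c)` of the Leibniz rule for the moment is `c` times the one
for the mass, and the latter is `-D₁` because the mass is constant. -/
theorem hasDerivAt_integral_id_mul_of_const_mass {φ φ' : ℝ → ℝ → ℝ} {c : ℝ → ℝ}
    {a t₀ c' m B M D₁ D₂ : ℝ} (hφ : ∀ t, Continuous (φ t))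
    (hφ' : ∀ t z, HasDerivAt (φ · z) (φ' t z) t) (hM : ∀ t z, |φ' t z| ≤ M)
    (hsupp : ∀ t, ∀ᵐ z, z ∉ Icc (-B) B → φ t z = 0) (hc : HasDerivAt c c' t₀)
    (hD₁ : HasDerivAt (fun t => ∫ z in a..c t₀, φ t z) D₁ t₀)
    (hD₂ : HasDerivAt (fun t => ∫ z in a..c t₀, z * φ t z) D₂ t₀)
    (hmass : ∀ t, ∫ z in a..c t, φ t z = m) :
    HasDerivAt (fun t => ∫ z in a..c t, z * φ t z) (D₂ - c t₀ * D₁) t₀ := by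
  have hlip (t z) : |φ t z - φ t₀ z| ≤ M * |t - t₀| :=
    abs_sub_le_of_hasDerivAt (fun s => hφ' s z) (fun s => hM s z) _ _
  have hlip_mul (t) : ∀ᵐ z, |z * φ t z - z * φ t₀ z| ≤ |B| * M * |t - t₀| := by
    filter_upwards [hsupp t, hsupp t₀] with z ht h₀
    by_cases hz : z ∈ Icc (-B) B
    · rw [← mul_sub, abs_mul, mul_assoc]
      exact mul_le_mul ((abs_le.2 hz).trans (le_abs_self B)) (hlip t z) (abs_nonneg _)
        (abs_nonneg B)
    · have hM0 : 0 ≤ M := (abs_nonneg _).trans (hM t₀ 0)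
      rw [ht hz, h₀ hz, sub_self, abs_zero]
      positivity
  have hboundary : D₁ + c' * φ t₀ (c t₀) = 0 :=
    ((hasDerivAt_integral_upper_of_lipschitz hφ hc hD₁ fun t => ae_of_all _ (hlip t))
      |>.congr_of_eventuallyEq (Eventually.of_forall fun t => (hmass t).symm)).unique
      (hasDerivAt_const _ _)
  convert hasDerivAt_integral_upper_of_lipschitz (φ := fun t z => z * φ t z)
    (fun t => continuous_id.mul (hφ t)) hc hD₂ hlip_mul using 1
  linear_combination (-c t₀) * hboundary

open Filter in
/-- A nonnegative function has a minimum at each zero, so `g'` vanishes there and the identity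
also holds where `g' / g t` is the junk value `g' / 0 = 0`. -/
theorem HasDerivAt.mul_div_cancel_of_nonneg {g : ℝ → ℝ} {g' t : ℝ} (hg : HasDerivAt g g' t)
    (hg0 : ∀ s, 0 ≤ g s) : g t * (g' / g t) = g' := by
  rcases eq_or_ne (g t) 0 with h | h
  · have hmin : IsLocalMin g t := Eventually.of_forall fun s => h ▸ hg0 s
    rw [h, hmin.hasDerivAt_eq_zero hg, zero_div, mul_zero]
  · field_simp

theorem le_of_integral_pos_of_nonneg {g : ℝ → ℝ} {a c : ℝ} (hg : ∀ z, 0 ≤ g z)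
    (hpos : 0 < ∫ z in a..c, g z) : a ≤ c := by
  by_contra! h
  rw [integral_symm] at hpos
  linarith [integral_nonneg_of_forall (μ := volume) h.le hg]

theorem setIntegral_Iic_eq_intervalIntegral {g : ℝ → ℝ} {a c : ℝ} (hac : a ≤ c)
    (hg : ∀ᵐ z, z < a → g z = 0) : ∫ z in Iic c, g z = ∫ z in a..c, g z := by
  rw [integral_of_le hac, ← integral_Icc_eq_integral_Ioc,
    setIntegral_eq_of_subset_of_ae_sdiff_eq_zero measurableSet_Iic.nullMeasurableSet
      Icc_subset_Iic_self]
  filter_upwards [hg] with z hz hz'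
  exact hz (not_le.1 fun haz => hz'.2 ⟨haz, hz'.1⟩)

section Density

variable {Ω : Type*} [MeasurableSpace Ω] {P : Measure Ω} {Z : Ω → ℝ} {f : ℝ → ℝ}

theorem ae_eq_zero_of_measure_preimage_eq_zero (hZ : Measurable Z) (hf : Measurable f)
    (hf0 : ∀ z, 0 ≤ f z) (hdens : P.map Z = volume.withDensity fun z => ENNReal.ofReal (f z))
    {s : Set ℝ} (hs : MeasurableSet s) (hPs : P (Z ⁻¹' s) = 0) : ∀ᵐ z, z ∈ s → f z = 0 := by
  rw [← Measure.map_apply hZ hs, hdens, withDensity_apply_eq_zero hf.ennreal_ofReal,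
    measure_eq_zero_iff_ae_notMem] at hPs
  filter_upwards [hPs] with z hz hzs
  exact le_antisymm (ENNReal.ofReal_eq_zero.1 (not_not.1 fun h => hz ⟨h, hzs⟩)) (hf0 z)

theorem setIntegral_preimage_eq_setIntegral_mul (hZ : Measurable Z) (hf : Measurable f)
    (hf0 : ∀ z, 0 ≤ f z) (hdens : P.map Z = volume.withDensity fun z => ENNReal.ofReal (f z))
    {s : Set ℝ} (hs : MeasurableSet s) {g : ℝ → ℝ} (hg : Measurable g) :
    ∫ ω in Z ⁻¹' s, g (Z ω) ∂P = ∫ z in s, g z * f z := by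
  rw [← setIntegral_map hs hg.aestronglyMeasurable hZ.aemeasurable, hdens]
  refine (setIntegral_withDensity_eq_setIntegral_smul hf.real_toNNReal g hs).trans
    (setIntegral_congr_fun hs fun z _ => ?_)
  rw [NNReal.smul_def, Real.coe_toNNReal _ (hf0 z), smul_eq_mul, mul_comm]

theorem setIntegral_le_eq_intervalIntegral_mul (hZ : Measurable Z) (hf : Measurable f)
    (hf0 : ∀ z, 0 ≤ f z) (hdens : P.map Z = volume.withDensity fun z => ENNReal.ofReal (f z))
    {a c : ℝ} (hac : a ≤ c) (hfa : ∀ᵐ z, z < a → f z = 0) {g : ℝ → ℝ} (hg : Measurable g) :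
    ∫ ω in {ω | Z ω ≤ c}, g (Z ω) ∂P = ∫ z in a..c, g z * f z := by
  rw [← setIntegral_Iic_eq_intervalIntegral hac (hfa.mono fun z hz hza => by rw [hz hza, mul_zero])]
  exact setIntegral_preimage_eq_setIntegral_mul hZ hf hf0 hdens measurableSet_Iic hg

end Density

theorem stmt_4_general {Ω : Type*} [MeasurableSpace Ω] (k : ℕ) (b : ℝ) (α : ℝ)
    (hα : α ∈ Set.Ioo (0:ℝ) 1)
    (P : (Fin k → ℝ) → Measure Ω) (hP : ∀ θ, IsProbabilityMeasure (P θ))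
    (Z : Ω → ℝ) (hZmeas : Measurable Z)
    (f : (Fin k → ℝ) → ℝ → ℝ) (f' : (Fin k → ℝ) → Fin k → ℝ → ℝ)
    (ν Φ : (Fin k → ℝ) → ℝ) (ν' Φ' : (Fin k → ℝ) → Fin k → ℝ)
    -- `Z` has density `f(·;θ)` under `P θ`
    (hf_nonneg : ∀ θ z, 0 ≤ f θ z)
    (hdens : ∀ θ, Measure.map Z (P θ) = volume.withDensity fun z => ENNReal.ofReal (f θ z))
    -- `Z` is bounded in `[-b,b]`
    (hbdd : ∀ θ, P θ {ω | Z ω ∈ Set.Icc (-b) b} = 1)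
    -- the α-VaR and the α-CVaR (conditional expectation of `Z` given `Z ≤ ν(θ)`)
    (hΦ : ∀ θ, Φ θ =
      (∫ ω in {ω | Z ω ≤ ν θ}, Z ω ∂(P θ)) / (P θ {ω | Z ω ≤ ν θ}).toReal)
    -- Assumption 2: the gradients of the VaR and the CVaR exist and are bounded
    (hν' : ∀ θ j, HasDerivAt (fun t => ν (Function.update θ j t)) (ν' θ j) (θ j))
    (hΦ' : ∀ θ j, HasDerivAt (fun t => Φ (Function.update θ j t)) (Φ' θ j) (θ j))
    -- Assumption 3: `(∂f(z;θ)/∂θ_j)/f(z;θ)` exists and is bounded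
    (hf' : ∀ θ j z, HasDerivAt (fun t => f (Function.update θ j t) z) (f' θ j z) (θ j))
    -- smoothness making differentiation under the integral sign valid
    (hf_cont : ∀ θ, Continuous (f θ))
    (hf'_bdd : ∃ M, ∀ θ j z, |f' θ j z| ≤ M)
    (hf'_cont : ∀ θ j, Continuous (f' θ j))
    (hDUI : ∀ θ j c, HasDerivAt (fun t => ∫ z in (-b)..c, f (Function.update θ j t) z)
      (∫ z in (-b)..c, f' θ j z) (θ j))
    (hDUI2 : ∀ θ j c, HasDerivAt (fun t => ∫ z in (-b)..c, z * f (Function.update θ j t) z)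
      (∫ z in (-b)..c, z * f' θ j z) (θ j))
    -- level condition: `∫_{-b}^{ν(θ)} f(z;θ) dz = α` for all `θ`
    (hlevel : ∀ θ, ∫ z in (-b)..(ν θ), f θ z = α) :
    ∀ (θ : Fin k → ℝ) (j : Fin k),
      Φ' θ j = (∫ ω in {ω | Z ω ≤ ν θ},
          (f' θ j (Z ω) / f θ (Z ω)) * (Z ω - ν θ) ∂(P θ)) /
        (P θ {ω | Z ω ≤ ν θ}).toReal := by
  intro θ j
  obtain ⟨M, hM⟩ := hf'_bdd
  have hvanish (θ) : ∀ᵐ z, z ∉ Icc (-b) b → f θ z = 0 :=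
    ae_eq_zero_of_measure_preimage_eq_zero hZmeas (hf_cont θ).measurable (hf_nonneg θ) (hdens θ)
      measurableSet_Icc.compl ((prob_compl_eq_zero_iff (hZmeas measurableSet_Icc)).2 (hbdd θ))
  have hν_ge (θ) : -b ≤ ν θ :=
    le_of_integral_pos_of_nonneg (hf_nonneg θ) (hlevel θ ▸ hα.1)
  have hcond (θ) {g : ℝ → ℝ} (hg : Measurable g) :
      ∫ ω in {ω | Z ω ≤ ν θ}, g (Z ω) ∂P θ = ∫ z in (-b)..ν θ, g z * f θ z :=
    setIntegral_le_eq_intervalIntegral_mul hZmeas (hf_cont θ).measurable (hf_nonneg θ) (hdens θ)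
      (hν_ge θ) ((hvanish θ).mono fun z hz hzb => hz fun hz' => hzb.not_ge hz'.1) hg
  have hprob (θ) : (P θ {ω | Z ω ≤ ν θ}).toReal = α := by
    simpa [setIntegral_const, hlevel θ, measureReal_def] using hcond θ (g := fun _ => 1)
      measurable_const
  have hθ : Function.update θ j (θ j) = θ := Function.update_eq_self j θ
  have hmoment := hasDerivAt_integral_id_mul_of_const_mass (φ := fun t => f (Function.update θ j t))
    (fun t => hf_cont _) (fun t z => by simpa using hf' (Function.update θ j t) j z)
    (fun t z => hM _ j z) (fun t => hvanish _) (hν' θ j)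
    (by simpa only [hθ] using hDUI θ j (ν θ)) (by simpa only [hθ] using hDUI2 θ j (ν θ))
    (fun t => hlevel _)
  have hΦ'_eq : Φ' θ j
      = ((∫ z in (-b)..ν θ, z * f' θ j z) - ν θ * ∫ z in (-b)..ν θ, f' θ j z) / α := by
    refine (hΦ' θ j).unique (((hθ ▸ hmoment).div_const α).congr_of_eventuallyEq
      (Filter.Eventually.of_forall fun t => ?_))
    dsimp only
    rw [hΦ, hprob, hcond _ (g := fun z => z) measurable_id]
  have hscore (z) : f' θ j z / f θ z * (z - ν θ) * f θ z = z * f' θ j z - ν θ * f' θ j z := by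
    have := (hf' θ j z).mul_div_cancel_of_nonneg fun t => hf_nonneg _ z
    simp only [hθ] at this
    linear_combination (z - ν θ) * this
  have hscore_meas : Measurable fun z => f' θ j z / f θ z * (z - ν θ) :=
    ((hf'_cont θ j).measurable.div (hf_cont θ).measurable).mul (measurable_id.sub_const _)
  rw [hΦ'_eq, hcond θ hscore_meas, hprob, integral_congr fun z _ => hscore z,
    integral_sub (f := fun z => z * f' θ j z) (g := fun z => ν θ * f' θ j z)
    ((continuous_id.mul (hf'_cont θ j)).intervalIntegrable _ _)
    ((continuous_const.mul (hf'_cont θ j)).intervalIntegrable _ _),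
    intervalIntegral.integral_const_mul]

/-- Proposition 1 (CVaR gradient formula, 1-dimensional case). Let `Z` be a continuous real
random variable bounded in `[-b,b]` whose density `f(z;θ)` is parameterized by `θ ∈ ℝ^k`,
and let `α ∈ (0,1)`. Under the assumptions of the paper (boundedness and existence of the
derivatives of the VaR `ν` and the CVaR `Φ`, bounded likelihood ratio `(∂f/∂θ_j)/f`,
validity of differentiation under the integral sign, and the level condition
`∫_{-b}^{ν(θ)} f(z;θ) dz = α`), the CVaR gradient is the conditional expectation
`∂Φ(θ)/∂θ_j = E^θ[ (∂ log f(Z;θ)/∂θ_j)·(Z − ν(θ)) | Z ≤ ν(θ) ]`. -/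
theorem stmt_4 {Ω : Type*} [MeasurableSpace Ω] (k : ℕ) (b : ℝ) (α : ℝ)
    (hα : α ∈ Set.Ioo (0:ℝ) 1)
    (P : (Fin k → ℝ) → Measure Ω) (hP : ∀ θ, IsProbabilityMeasure (P θ))
    (Z : Ω → ℝ) (hZmeas : Measurable Z)
    (f : (Fin k → ℝ) → ℝ → ℝ) (f' : (Fin k → ℝ) → Fin k → ℝ → ℝ)
    (ν Φ : (Fin k → ℝ) → ℝ) (ν' Φ' : (Fin k → ℝ) → Fin k → ℝ)
    -- `Z` has density `f(·;θ)` under `P θ`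
    (hf_nonneg : ∀ θ z, 0 ≤ f θ z)
    (hdens : ∀ θ, Measure.map Z (P θ) = volume.withDensity fun z => ENNReal.ofReal (f θ z))
    -- `Z` is bounded in `[-b,b]`
    (hbdd : ∀ θ, P θ {ω | Z ω ∈ Set.Icc (-b) b} = 1)
    -- the α-VaR and the α-CVaR (conditional expectation of `Z` given `Z ≤ ν(θ)`)
    (hν : ∀ θ, ν θ = sInf {z | α ≤ (P θ {ω | Z ω ≤ z}).toReal})
    (hΦ : ∀ θ, Φ θ =
      (∫ ω in {ω | Z ω ≤ ν θ}, Z ω ∂(P θ)) / (P θ {ω | Z ω ≤ ν θ}).toReal)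
    -- Assumption 2: the gradients of the VaR and the CVaR exist and are bounded
    (hν' : ∀ θ j, HasDerivAt (fun t => ν (Function.update θ j t)) (ν' θ j) (θ j))
    (hν'_bdd : ∃ M, ∀ θ j, |ν' θ j| ≤ M)
    (hΦ' : ∀ θ j, HasDerivAt (fun t => Φ (Function.update θ j t)) (Φ' θ j) (θ j))
    (hΦ'_bdd : ∃ M, ∀ θ j, |Φ' θ j| ≤ M)
    -- Assumption 3: `(∂f(z;θ)/∂θ_j)/f(z;θ)` exists and is bounded
    (hf' : ∀ θ j z, HasDerivAt (fun t => f (Function.update θ j t) z) (f' θ j z) (θ j))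
    (hLR_bdd : ∃ M, ∀ θ j z, |f' θ j z / f θ z| ≤ M)
    -- smoothness making differentiation under the integral sign valid
    (hf_cont : ∀ θ, Continuous (f θ))
    (hf'_bdd : ∃ M, ∀ θ j z, |f' θ j z| ≤ M)
    (hf'_cont : ∀ θ j, Continuous (f' θ j))
    (hDUI : ∀ θ j c, HasDerivAt (fun t => ∫ z in (-b)..c, f (Function.update θ j t) z)
      (∫ z in (-b)..c, f' θ j z) (θ j))
    (hDUI2 : ∀ θ j c, HasDerivAt (fun t => ∫ z in (-b)..c, z * f (Function.update θ j t) z)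
      (∫ z in (-b)..c, z * f' θ j z) (θ j))
    -- level condition: `∫_{-b}^{ν(θ)} f(z;θ) dz = α` for all `θ`
    (hlevel : ∀ θ, ∫ z in (-b)..(ν θ), f θ z = α) :
    ∀ (θ : Fin k → ℝ) (j : Fin k),
      Φ' θ j = (∫ ω in {ω | Z ω ≤ ν θ},
          (f' θ j (Z ω) / f θ (Z ω)) * (Z ω - ν θ) ∂(P θ)) /
        (P θ {ω | Z ω ≤ ν θ}).toReal :=
  stmt_4_general k b α hα P hP Z hZmeas f f' ν Φ ν' Φ' hf_nonneg hdens hbdd hΦ hν' hΦ' hf' hf_cont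
    hf'_bdd hf'_cont hDUI hDUI2 hlevel
end

section
/- (Necessity of the VaR baseline.) Let Z be a real random variable with the Gaussian distribution N(θ,1) of mean θ ∈ ℝ and variance 1, and let α = 1/2, so that ν_α(Z;θ) = θ and ∂log f_Z(z;θ)/∂θ = z − θ. Then the expectation of the baseline-free likelihood-ratio quantity is E[(∂log f_Z(Z;θ)/∂θ)·Z | Z ≤ ν_α(Z;θ)] = E[(Z − θ)·Z | Z ≤ θ] = 1 − √(2/π)·θ. Hence it differs from the true CVaR gradient (which equals 1, independent of θ) by the term −√(2/π)·θ, whose absolute value is unbounded in θ; in particular, for |θ| large enough the baseline-free estimator's expectation has the opposite sign to the true gradient. -/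
/-
Integration by parts against the Gaussian density `φ` of `N(μ, v)`:
since `φ' x = -((x - μ) / v) φ x`, the function `-v x φ x` is an antiderivative of
`((x - μ) x - v) φ x`, which gives
`∫_{x ≤ a} (x - μ) x dN(μ, v) = v P(X ≤ a) - v a φ a`.
At `a = μ` the reflection `x ↦ 2μ - x` gives `P(X ≤ μ) = 1/2`, and `φ μ = 1 / √(2πv)`;
for `v = 1` the conditional expectation is therefore `1 - 2θ / √(2π) = 1 - √(2/π) θ`.
-/

open MeasureTheory ProbabilityTheory Real Set
open scoped NNReal

namespace ProbabilityTheory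

variable {μ : ℝ} {v : ℝ≥0}

lemma gaussianReal_Iic_self (hv : v ≠ 0) : (gaussianReal μ v).real (Iic μ) = 1 / 2 := by
  have := nullSingletonClass_gaussianReal (μ := μ) hv
  have hrefl : (gaussianReal μ v).map (2 * μ - ·) = gaussianReal μ v := by
    rw [gaussianReal_map_const_sub]
    ring_nf
  have hsymm : gaussianReal μ v (Iic μ) = gaussianReal μ v (Ioi μ) := by
    rw [measure_congr Ioi_ae_eq_Ici, ← hrefl, Measure.map_apply (by fun_prop) measurableSet_Ici]
    congr 1
    ext x
    simp only [mem_Iic, mem_preimage, mem_Ici]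
    constructor <;> intro h <;> linarith
  have hsum :=
    measureReal_add_measureReal_compl (μ := gaussianReal μ v) (measurableSet_Iic (a := μ))
  rw [compl_Iic, probReal_univ] at hsum
  simp only [measureReal_def, hsymm] at hsum ⊢
  linarith

lemma gaussianPDFReal_self : gaussianPDFReal μ v μ = (√(2 * π * v))⁻¹ := by
  simp [gaussianPDFReal]

lemma setIntegral_gaussianReal_eq_setIntegral_mul (hv : v ≠ 0) {s : Set ℝ}
    (hs : MeasurableSet s) (f : ℝ → ℝ) :
    ∫ x in s, f x ∂gaussianReal μ v = ∫ x in s, gaussianPDFReal μ v x * f x := by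
  rw [gaussianReal_of_var_ne_zero _ hv, setIntegral_withDensity_eq_setIntegral_toReal_smul
    (measurable_gaussianPDF _ _) (ae_of_all _ fun _ ↦ gaussianPDF_lt_top) f hs]
  simp only [toReal_gaussianPDF, smul_eq_mul]

lemma integrable_gaussianPDFReal_mul_iff (hv : v ≠ 0) {f : ℝ → ℝ} :
    Integrable (fun x ↦ gaussianPDFReal μ v x * f x) ↔ Integrable f (gaussianReal μ v) := by
  rw [gaussianReal_of_var_ne_zero _ hv, integrable_withDensity_iff_integrable_smul'
    (measurable_gaussianPDF _ _) (ae_of_all _ fun _ ↦ gaussianPDF_lt_top)]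
  simp only [toReal_gaussianPDF, smul_eq_mul]

lemma integrable_id_gaussianReal : Integrable id (gaussianReal μ v) :=
  (memLp_id_gaussianReal 1).integrable le_rfl

lemma integrable_sub_mul_gaussianReal : Integrable (fun x ↦ (x - μ) * x) (gaussianReal μ v) :=
  have hL2 : MemLp id 2 (gaussianReal μ v) := memLp_id_gaussianReal' 2 (by norm_num)
  (hL2.sub (memLp_const μ)).integrable_mul hL2

lemma hasDerivAt_gaussianPDFReal (x : ℝ) :
    HasDerivAt (gaussianPDFReal μ v) (-((x - μ) / v) * gaussianPDFReal μ v x) x := by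
  have hexp : HasDerivAt (fun x ↦ -(x - μ) ^ 2 / (2 * v)) (-((x - μ) / v)) x := by
    refine ((((hasDerivAt_id x).sub_const μ).pow 2).neg.div_const (2 * (v : ℝ))).congr_deriv
      ?_
    simp only [id, Nat.cast_ofNat, Nat.add_one_sub_one, pow_one, mul_one]
    field_simp
  rw [gaussianPDFReal_def]
  exact (hexp.exp.const_mul (√(2 * π * v))⁻¹).congr_deriv (by ring)

lemma hasDerivAt_neg_mul_gaussianPDFReal (hv : v ≠ 0) (x : ℝ) :
    HasDerivAt (fun x ↦ -(v * x * gaussianPDFReal μ v x))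
      (gaussianPDFReal μ v x * ((x - μ) * x - v)) x := by
  have hv' : (v : ℝ) ≠ 0 := by exact_mod_cast hv
  refine ((((hasDerivAt_id x).const_mul (v : ℝ)).mul
    (hasDerivAt_gaussianPDFReal (μ := μ) (v := v) x)).neg).congr_deriv ?_
  simp only [id]
  field_simp
  ring

lemma setIntegral_Iic_sub_mul_sub_gaussianReal (hv : v ≠ 0) (a : ℝ) :
    ∫ x in Iic a, ((x - μ) * x - v) ∂gaussianReal μ v
      = -(v * a * gaussianPDFReal μ v a) := by
  have hderiv := hasDerivAt_neg_mul_gaussianPDFReal (μ := μ) hv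
  have hint : Integrable (fun x ↦ gaussianPDFReal μ v x * ((x - μ) * x - v)) :=
    (integrable_gaussianPDFReal_mul_iff hv).2
      (integrable_sub_mul_gaussianReal.sub (integrable_const (v : ℝ)))
  have hF_int : Integrable (fun x ↦ -(v * x * gaussianPDFReal μ v x)) :=
    ((integrable_gaussianPDFReal_mul_iff hv).2
      (integrable_id_gaussianReal.const_mul (-(v : ℝ)))).congr
        (ae_of_all _ fun x ↦ by simp only [id]; ring)
  rw [setIntegral_gaussianReal_eq_setIntegral_mul hv measurableSet_Iic,
    integral_Iic_of_hasDerivAt_of_tendsto' (fun x _ ↦ hderiv x) hint.integrableOn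
      (tendsto_zero_of_hasDerivAt_of_integrableOn_Iic (a := a) (fun x _ ↦ hderiv x)
        hint.integrableOn hF_int.integrableOn), sub_zero]

lemma setIntegral_Iic_sub_mul_gaussianReal (hv : v ≠ 0) (a : ℝ) :
    ∫ x in Iic a, (x - μ) * x ∂gaussianReal μ v
      = v * (gaussianReal μ v).real (Iic a) - v * a * gaussianPDFReal μ v a := by
  have hint : Integrable (fun x ↦ (x - μ) * x - v) (gaussianReal μ v) :=
    integrable_sub_mul_gaussianReal.sub (integrable_const _)
  calc ∫ x in Iic a, (x - μ) * x ∂gaussianReal μ v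
      = ∫ x in Iic a, ((x - μ) * x - v) ∂gaussianReal μ v
          + ∫ x in Iic a, (v : ℝ) ∂gaussianReal μ v := by
        rw [← integral_add hint.integrableOn (integrable_const _)]
        simp only [sub_add_cancel]
    _ = v * (gaussianReal μ v).real (Iic a) - v * a * gaussianPDFReal μ v a := by
        rw [setIntegral_Iic_sub_mul_sub_gaussianReal hv, setIntegral_const, smul_eq_mul]
        ring

end ProbabilityTheory

lemma Real.sqrt_two_div_pi : √(2 / π) = 2 * (√(2 * π))⁻¹ := by
  rw [← sqrt_inv, show 2 / π = 2 ^ 2 * (2 * π)⁻¹ by field_simp, sqrt_mul (by norm_num),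
    sqrt_sq (by norm_num)]

/-- Necessity of the VaR baseline. For `Z ~ N(θ,1)` and `α = 1/2` (so `ν_α(Z;θ) = θ` and
`∂log f_Z(z;θ)/∂θ = z − θ`), the expectation of the baseline-free likelihood-ratio quantity
is `E[(Z − θ)·Z | Z ≤ θ] = 1 − √(2/π)·θ`. Hence it differs from the true CVaR gradient
(which equals `1`) by `−√(2/π)·θ`, whose absolute value is unbounded in `θ`; in particular
for `θ > √(π/2)` the baseline-free expectation is negative, i.e., has the opposite sign to
the true gradient. -/
theorem stmt_13 :
    (∀ θ : ℝ, (∫ z in Set.Iic θ, (z - θ) * z ∂(gaussianReal θ 1)) /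
        ((gaussianReal θ 1) (Set.Iic θ)).toReal = 1 - Real.sqrt (2 / Real.pi) * θ) ∧
    (∀ C : ℝ, ∃ θ : ℝ, C < |(-(Real.sqrt (2 / Real.pi) * θ))|) ∧
    (∀ θ : ℝ, Real.sqrt (Real.pi / 2) < θ → 1 - Real.sqrt (2 / Real.pi) * θ < 0) := by
  have hc : 0 < √(2 / π) := by positivity
  refine ⟨fun θ ↦ ?_, fun C ↦ ?_, fun θ hθ ↦ ?_⟩
  · rw [← measureReal_def, setIntegral_Iic_sub_mul_gaussianReal one_ne_zero,
      gaussianReal_Iic_self one_ne_zero, gaussianPDFReal_self, sqrt_two_div_pi]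
    simp only [NNReal.coe_one, mul_one]
    ring
  · refine ⟨(|C| + 1) / √(2 / π), ?_⟩
    rw [abs_neg, mul_div_cancel₀ _ hc.ne', abs_of_pos (by positivity)]
    linarith [le_abs_self C]
  · rw [← inv_div, sqrt_inv, inv_lt_iff_one_lt_mul₀' hc] at hθ
    linarith
end
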